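/- arXiv:0910.1897 — 2 statements merged into one kernel-verified Lean document; each statement's English description precedes it below -/
import Mathlib

section
/- Let X be a first countable, Lindelöf, Hausdorff topological space and let C ⊆ 𝕃₊ × X be a closed subset that is 𝕃₊-unbounded, i.e. its projection to the 𝕃₊-factor is cofinal in 𝕃₊. Then there exists x ∈ X such that C ∩ (𝕃₊ × {x}) is 𝕃₊-unbounded. -/
noncomputable section

open Set Topology Filter

universe u

/-! ### The long ray and the long line -/

/-- The first uncountable ordinal `ω₁`, viewed as the linearly ordered set of all
countable ordinals. -/
def Omega1 : Type 1 := {o : Ordinal.{0} // o < (Cardinal.aleph 1).ord}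

instance : LinearOrder Omega1 :=
  inferInstanceAs (LinearOrder {o : Ordinal.{0} // o < (Cardinal.aleph 1).ord})

/-- `ω₁` carries the order topology. -/
instance : TopologicalSpace Omega1 := Preorder.topology Omega1

instance : OrderTopology Omega1 := ⟨rfl⟩

/-- The underlying countable ordinal of an element of `ω₁`. -/
def Omega1.toOrdinal : Omega1 → Ordinal.{0} := Subtype.val

/-- The closed long ray `𝕃≥0`: the set `ω₁ × [0,1)` with the lexicographic order and the
order topology. -/
def ClosedLongRay : Type 1 := Omega1 ×ₗ (Set.Ico (0:ℝ) 1)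

instance : LinearOrder ClosedLongRay :=
  inferInstanceAs (LinearOrder (Omega1 ×ₗ (Set.Ico (0:ℝ) 1)))

instance : TopologicalSpace ClosedLongRay := Preorder.topology ClosedLongRay

instance : OrderTopology ClosedLongRay := ⟨rfl⟩

/-- The long ray `𝕃₊`: the closed long ray with its least element removed, with the
subspace topology (an element is non-minimal iff something is below it). -/
def LongRay : Type 1 := {x : ClosedLongRay // ∃ y, y < x}

instance : LinearOrder LongRay :=
  inferInstanceAs (LinearOrder {x : ClosedLongRay // ∃ y, y < x})

instance : TopologicalSpace LongRay :=
  inferInstanceAs (TopologicalSpace {x : ClosedLongRay // ∃ y, y < x})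

/-- The inclusion of the long ray into the closed long ray. -/
def LongRay.toCLR : LongRay → ClosedLongRay := Subtype.val

/-- The long line `𝕃`: an order-reversed copy of `𝕃₊` placed below the closed long ray
`𝕃≥0`, with the order topology. -/
def LongLine : Type 1 := (OrderDual LongRay) ⊕ₗ ClosedLongRay

instance : LinearOrder LongLine :=
  inferInstanceAs (LinearOrder ((OrderDual LongRay) ⊕ₗ ClosedLongRay))

instance : TopologicalSpace LongLine := Preorder.topology LongLine

instance : OrderTopology LongLine := ⟨rfl⟩

/-- The identification of `𝕃₊` with the set of positive elements of `𝕃`. -/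
def LongRay.inL (a : LongRay) : LongLine := toLex (Sum.inr a.toCLR)

/-- The natural order-reversing involution `x ↦ -x` of the long line, exchanging the two
copies of `𝕃₊` and fixing the least element `0` of `𝕃≥0`. -/
noncomputable def LongLine.neg (x : LongLine) : LongLine :=
  match ofLex x with
  | Sum.inl a => toLex (Sum.inr (OrderDual.ofDual a).toCLR)
  | Sum.inr b =>
      @dite _ (∃ y, y < b) (Classical.dec _)
        (fun h => toLex (Sum.inl (OrderDual.toDual (⟨b, h⟩ : LongRay))))
        (fun _ => x)

/-- A subset of the long ray is a *club* if it is closed (in the topology of `𝕃₊`) and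
unbounded (i.e. cofinal). -/
def ClubInLongRay (C : Set LongRay) : Prop :=
  IsClosed C ∧ ∀ β : LongRay, ∃ α ∈ C, β ≤ α

/-- A topological space `X` is *squat* if every continuous map `𝕃₊ → X` is eventually
constant. -/
def Squat (X : Type*) [TopologicalSpace X] : Prop :=
  ∀ f : LongRay → X, Continuous f → ∃ (β : LongRay) (x : X), ∀ α, β ≤ α → f α = x

/-! ### Manifolds and foliations -/

/-- A (topological) `n`-manifold: a nonempty Hausdorff space in which every point has an
open neighbourhood homeomorphic to `ℝⁿ`. -/
def IsTopManifold (M : Type u) [TopologicalSpace M] (n : ℕ) : Prop :=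
  Nonempty M ∧ T2Space M ∧
    ∀ x : M, ∃ U : Set M, x ∈ U ∧ IsOpen U ∧ Nonempty (U ≃ₜ (Fin n → ℝ))

/-- A foliation of dimension `p` and codimension `q` on a space `M`: a family of charts
`φᵢ : Uᵢ ≃ₜ ℝᵖ × ℝ^q` on open sets covering `M` such that all coordinate transformations
have the form `(x, y) ↦ (g (x, y), h y)`, i.e. the last `q` coordinates of the image
depend only on the last `q` coordinates of the argument. -/
structure Foliation (M : Type u) [TopologicalSpace M] (p q : ℕ) where
  /-- index type of the atlas -/
  ι : Type u
  /-- chart domains -/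
  U : ι → Set M
  /-- the charts -/
  chart : (i : ι) → ((U i) ≃ₜ ((Fin p → ℝ) × (Fin q → ℝ)))
  isOpen : ∀ i, IsOpen (U i)
  covers : ∀ x : M, ∃ i, x ∈ U i
  compat : ∀ i j (x y : M) (hxi : x ∈ U i) (hxj : x ∈ U j) (hyi : y ∈ U i) (hyj : y ∈ U j),
    (chart i ⟨x, hxi⟩).2 = (chart i ⟨y, hyi⟩).2 → (chart j ⟨x, hxj⟩).2 = (chart j ⟨y, hyj⟩).2

namespace Foliation

variable {M : Type u} [TopologicalSpace M] {p q : ℕ}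

/-- The set `φᵢ⁻¹ (ℝᵖ × {y})` in the chart domain `Uᵢ`. -/
def plaqueFibre (F : Foliation M p q) (i : F.ι) (y : Fin q → ℝ) : Set M :=
  {w : M | ∃ hw : w ∈ F.U i, (F.chart i ⟨w, hw⟩).2 = y}

/-- A *plaque* of the foliation: a connected component of a set of the form
`φᵢ⁻¹ (ℝᵖ × {y})`. -/
def IsPlaque (F : Foliation M p q) (P : Set M) : Prop :=
  ∃ (i : F.ι) (y : Fin q → ℝ) (z : M), z ∈ F.plaqueFibre i y ∧
    P = connectedComponentIn (F.plaqueFibre i y) z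

/-- Two points lie in a common plaque. -/
def samePlaque (F : Foliation M p q) (x y : M) : Prop :=
  ∃ P, F.IsPlaque P ∧ x ∈ P ∧ y ∈ P

/-- The leaf relation: the smallest equivalence relation relating any two points that lie
in a common plaque. -/
def leafRel (F : Foliation M p q) : M → M → Prop := Relation.EqvGen F.samePlaque

/-- The *leaves* of the foliation: equivalence classes of the leaf relation. -/
def IsLeaf (F : Foliation M p q) (L : Set M) : Prop :=
  ∃ x : M, L = {y | F.leafRel x y}

/-- The *leaf topology* on a leaf (or any subset) `L`: the topology generated by the
plaques contained in `L`. -/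
def leafTopology (F : Foliation M p q) (L : Set M) : TopologicalSpace L :=
  TopologicalSpace.generateFrom
    {s : Set L | ∃ P, F.IsPlaque P ∧ P ⊆ L ∧ s = Subtype.val ⁻¹' P}

/-- A leaf is *long* if it is not metrisable in its leaf topology. -/
def IsLongLeaf (F : Foliation M p q) (L : Set M) : Prop :=
  F.IsLeaf L ∧ ¬ @TopologicalSpace.MetrizableSpace L (F.leafTopology L)

/-- A subset of `M` is *saturated* by the foliation if it is a union of leaves. -/
def Saturated (F : Foliation M p q) (S : Set M) : Prop :=
  ∀ x ∈ S, ∀ y, F.leafRel x y → y ∈ S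

end Foliation

/-! If every fibre of `C` were bounded, first countability of `X` would give each `x` a
neighbourhood `U x` and a bound `b x` with `C ∩ ([b x, ∞) × U x) = ∅`: otherwise points of `C`
ever further out and ever closer to `x` can be chosen with strictly increasing ordinal parts, and
they converge to a point of the fibre over `x` (countable suprema of countable ordinals are
countable). By the Lindelöf property countably many `U x` cover `X`, and the countably many
`b x` have a common bound in `𝕃₊` beyond which `C` is empty. -/

open Ordinal

namespace LongRay

def ord (a : LongRay) : Ordinal.{0} := (ofLex a.toCLR).1.toOrdinal

theorem ord_lt_omega_one (a : LongRay) : a.ord < ω₁ :=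
  Cardinal.ord_aleph 1 ▸ (ofLex a.toCLR).1.2

def ofOrd (o : Ordinal.{0}) (ho : o < ω₁) (h0 : 0 < o) : LongRay :=
  ⟨toLex (⟨o, Cardinal.ord_aleph 1 ▸ ho⟩, ⟨0, le_rfl, one_pos⟩),
    toLex (⟨0, Cardinal.ord_aleph 1 ▸ h0.trans ho⟩, ⟨0, le_rfl, one_pos⟩),
    Prod.Lex.toLex_lt_toLex.mpr (Or.inl h0)⟩

instance : Nonempty LongRay := ⟨ofOrd 1 (one_lt_omega0.trans omega0_lt_omega_one) one_pos⟩

theorem ord_mono : Monotone ord := fun _ _ hab => Prod.Lex.monotone_fst _ _ hab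

theorem lt_of_ord_lt {a b : LongRay} (h : a.ord < b.ord) : a < b :=
  Prod.Lex.toLex_lt_toLex.mpr (Or.inl h)

theorem ofOrd_le_iff {o : Ordinal.{0}} {ho : o < ω₁} {h0 : 0 < o} {b : LongRay} :
    ofOrd o ho h0 ≤ b ↔ o ≤ b.ord := by
  refine ⟨fun h => ord_mono h, fun h => ?_⟩
  rcases h.lt_or_eq with h | h
  · exact (lt_of_ord_lt h).le
  · exact Prod.Lex.toLex_le_toLex.mpr (Or.inr ⟨Subtype.ext h, (ofLex b.toCLR).2.2.1⟩)

theorem exists_forall_ge_ord_lt (a : LongRay) : ∃ b : LongRay, ∀ c ≥ b, a.ord < c.ord :=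
  have ho : a.ord + 1 < ω₁ := (Cardinal.isSuccLimit_omega 1).add_one_lt a.ord_lt_omega_one
  ⟨ofOrd (a.ord + 1) ho (by positivity), fun _ hc =>
    Order.add_one_le_iff.mp (ofOrd_le_iff.mp hc)⟩

theorem bddAbove_of_countable {s : Set LongRay} (hs : s.Countable) : BddAbove s := by
  have : Countable s := hs.to_subtype
  set γ := ⨆ a : s, (a : LongRay).ord
  have hγ : γ + 1 < ω₁ :=
    (Cardinal.isSuccLimit_omega 1).add_one_lt (iSup_lt_omega_one fun a => ord_lt_omega_one a)
  refine ⟨ofOrd (γ + 1) hγ (by positivity), fun a ha => (lt_of_ord_lt ?_).le⟩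
  exact Order.lt_add_one_iff.mpr (Ordinal.le_iSup (fun a : s => (a : LongRay).ord) ⟨a, ha⟩)

theorem exists_isLUB_of_strictMono_ord {f : ℕ → LongRay} (hf : StrictMono (ord ∘ f)) :
    ∃ a, IsLUB (range f) a := by
  set γ := ⨆ n, (f n).ord
  have hγ : γ < ω₁ := iSup_lt_omega_one fun n => ord_lt_omega_one (f n)
  have hlt : ∀ n, (f n).ord < γ := fun n =>
    (hf n.lt_succ_self).trans_le (Ordinal.le_iSup (ord ∘ f) (n + 1))
  refine ⟨ofOrd γ hγ (zero_le.trans_lt (hlt 0)), ?_, fun b hb => ?_⟩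
  · rintro _ ⟨n, rfl⟩
    exact (lt_of_ord_lt (hlt n)).le
  · exact ofOrd_le_iff.mpr (Ordinal.iSup_le fun n => ord_mono (hb ⟨n, rfl⟩))

instance : Set.OrdConnected {x : ClosedLongRay | ∃ y, y < x} :=
  ⟨fun _ ⟨y, hy⟩ _ _ _ hc => ⟨y, hy.trans_le hc.1⟩⟩

instance : OrderTopology LongRay :=
  inferInstanceAs (OrderTopology {x : ClosedLongRay | ∃ y, y < x})

end LongRay

theorem exists_forall_fst_ge_of_eventually_atTop_prod_nhds {L X : Type*} [LinearOrder L]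
    [TopologicalSpace X] [LindelofSpace X] (hL : ∀ s : Set L, s.Countable → BddAbove s)
    {P : L × X → Prop} (hP : ∀ x, ∀ᶠ p in atTop ×ˢ 𝓝 x, P p) :
    ∃ b, ∀ p : L × X, b ≤ p.1 → P p := by
  have : Nonempty L := (hL ∅ countable_empty).nonempty
  have hloc (x : X) : ∃ b, ∃ U ∈ 𝓝 x, ∀ p : L × X, b ≤ p.1 → p.2 ∈ U → P p := by
    obtain ⟨⟨b, U⟩, ⟨-, hU⟩, hbU⟩ :=
      (atTop_basis.prod (𝓝 x).basis_sets).eventually_iff.mp (hP x)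
    exact ⟨b, U, hU, fun p hb hU => hbU ⟨hb, hU⟩⟩
  choose b U hU hbU using hloc
  obtain ⟨t, htc, htU⟩ := LindelofSpace.elim_nhds_subcover U hU
  obtain ⟨B, hB⟩ := hL _ (htc.image b)
  refine ⟨B, fun p hp => ?_⟩
  obtain ⟨x, hxt, hpx⟩ := mem_iUnion₂.mp (htU ▸ mem_univ p.2)
  exact hbU x p ((hB (mem_image_of_mem b hxt)).trans hp) hpx

theorem LongRay.frequently_mem_fibre_of_frequently_prod_nhds {X : Type*} [TopologicalSpace X]
    [FirstCountableTopology X] {C : Set (LongRay × X)} (hC : IsClosed C) {x : X}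
    (h : ∃ᶠ p in atTop ×ˢ 𝓝 x, p ∈ C) : ∃ᶠ a in atTop, (a, x) ∈ C := by
  obtain ⟨u, hu⟩ := (𝓝 x).exists_antitone_basis
  have hpts : ∀ (b : LongRay) (n : ℕ), ∃ p ∈ C, b ≤ p.1 ∧ p.2 ∈ u n := fun b n => by
    obtain ⟨p, ⟨hb, hn⟩, hpC⟩ :=
      (atTop_basis.prod hu.toHasBasis).frequently_iff.mp h (b, n) ⟨trivial, trivial⟩
    exact ⟨p, hpC, hb, hn⟩
  choose q hqC hqb hqu using hpts
  choose next hnext using LongRay.exists_forall_ge_ord_lt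
  refine frequently_atTop.mpr fun β => ?_
  -- `b (n + 1)` lies beyond the ordinal part of `(F n).1`, so these ordinal parts increase
  let b : ℕ → LongRay := fun n => Nat.rec β (fun n bn => next (q bn n).1) n
  let F : ℕ → LongRay × X := fun n => q (b n) n
  have hord : StrictMono (LongRay.ord ∘ fun n => (F n).1) :=
    strictMono_nat_of_lt_succ fun n => hnext _ _ (hqb (b (n + 1)) (n + 1))
  have hmono : StrictMono fun n => (F n).1 := fun _ _ h => LongRay.lt_of_ord_lt (hord h)
  obtain ⟨a, ha⟩ := LongRay.exists_isLUB_of_strictMono_ord hord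
  have hFa : Tendsto F atTop (𝓝 (a, x)) :=
    (tendsto_atTop_isLUB hmono.monotone ha).prodMk_nhds (hu.tendsto fun n => hqu _ n)
  exact ⟨a, (hqb β 0).trans (ha.1 ⟨0, rfl⟩), hC.mem_of_tendsto hFa (.of_forall fun _ => hqC _ _)⟩

theorem statement5_general (X : Type*) [TopologicalSpace X]
    [FirstCountableTopology X] [LindelofSpace X]
    (C : Set (LongRay × X)) (hC : IsClosed C)
    (hub : ∀ β : LongRay, ∃ c ∈ C, β ≤ c.1) :
    ∃ x : X, ∀ β : LongRay, ∃ α : LongRay, β ≤ α ∧ (α, x) ∈ C := by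
  by_contra! hbdd
  have hfibre : ∀ x, ∀ᶠ p in atTop ×ˢ 𝓝 x, p ∉ C := fun x =>
    not_frequently.mp <| mt (LongRay.frequently_mem_fibre_of_frequently_prod_nhds hC)
      (not_frequently.mpr (eventually_atTop.mpr (hbdd x)))
  obtain ⟨B, hB⟩ := exists_forall_fst_ge_of_eventually_atTop_prod_nhds
    (fun _ => LongRay.bddAbove_of_countable) hfibre
  obtain ⟨c, hcC, hBc⟩ := hub B
  exact hB c hBc hcC

/-- If `X` is first countable, Lindelöf and Hausdorff and
`C ⊆ 𝕃₊ × X` is closed and `𝕃₊`-unbounded, then there is `x ∈ X` such that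
`C ∩ (𝕃₊ × {x})` is `𝕃₊`-unbounded. -/
theorem statement5 (X : Type*) [TopologicalSpace X]
    [FirstCountableTopology X] [LindelofSpace X] [T2Space X]
    (C : Set (LongRay × X)) (hC : IsClosed C)
    (hub : ∀ β : LongRay, ∃ c ∈ C, β ≤ c.1) :
    ∃ x : X, ∀ β : LongRay, ∃ α : LongRay, β ≤ α ∧ (α, x) ∈ C :=
  statement5_general X C hC hub
end
end

section
/- The long line 𝕃 is sequentially compact: every sequence in 𝕃 has a subsequence converging to a point of 𝕃. Likewise the closed long ray 𝕃≥0 is sequentially compact. -/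
noncomputable section

open Set Topology Filter

universe u

/-!
A sequence in a linear order has a monotone subsequence (infinitary Erdős–Szekeres), and in the
order topology a monotone sequence converges to its supremum (or infimum) whenever that exists.
In `𝕃≥0 = ω₁ ×ₗ [0,1)` every nonempty set has an infimum and every bounded one a supremum,
because `ω₁` is well ordered and `[0,1)` is conditionally complete; a countable set is bounded
since a countable supremum of countable ordinals is countable. The long line is the union of
`[0, ∞) ≅ 𝕃≥0` and of its mirror image `(-∞, 0]` under the homeomorphism `x ↦ -x`.
-/

theorem SeqCompactSpace.of_monotone_exists_isLUB {X : Type*} [LinearOrder X]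
    [TopologicalSpace X] [OrderTopology X]
    (hlub : ∀ u : ℕ → X, Monotone u → ∃ a, IsLUB (range u) a)
    (hglb : ∀ u : ℕ → X, Antitone u → ∃ a, IsGLB (range u) a) : SeqCompactSpace X where
  isSeqCompact_univ u _ := by
    obtain ⟨φ, hφ | hφ⟩ := exists_increasing_or_nonincreasing_subseq (· ≤ ·) u
    · have hmono : Monotone (u ∘ φ) := monotone_nat_of_le_succ fun n => hφ _ _ n.lt_succ_self
      obtain ⟨a, ha⟩ := hlub _ hmono
      exact ⟨a, mem_univ a, φ, φ.strictMono, tendsto_atTop_isLUB hmono ha⟩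
    · have hanti : Antitone (u ∘ φ) :=
        antitone_nat_of_succ_le fun n => (not_le.mp (hφ _ _ n.lt_succ_self)).le
      obtain ⟨a, ha⟩ := hglb _ hanti
      exact ⟨a, mem_univ a, φ, φ.strictMono, tendsto_atTop_isGLB hanti ha⟩

theorem IsSeqCompact.union {X : Type*} [TopologicalSpace X] {s t : Set X}
    (hs : IsSeqCompact s) (ht : IsSeqCompact t) : IsSeqCompact (s ∪ t) := by
  intro u hu
  obtain ⟨φ, hφ | hφ⟩ := Nat.exists_subseq_of_forall_mem_union u hu
  · obtain ⟨a, ha, ψ, hψ, hlim⟩ := hs hφ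
    exact ⟨a, Or.inl ha, φ ∘ ψ, φ.strictMono.comp hψ, hlim⟩
  · obtain ⟨a, ha, ψ, hψ, hlim⟩ := ht hφ
    exact ⟨a, Or.inr ha, φ ∘ ψ, φ.strictMono.comp hψ, hlim⟩

theorem WellFoundedLT.exists_isLUB {α : Type*} [LinearOrder α] [WellFoundedLT α] {s : Set α}
    (hs : BddAbove s) : ∃ a, IsLUB s a :=
  ⟨wellFounded_lt.min _ hs, wellFounded_lt.min_mem _ hs, fun _ hb => wellFounded_lt.min_le hb⟩

namespace Prod.Lex

section LinearOrder

variable {α β : Type*} [LinearOrder α] [LinearOrder β] {s : Set (α ×ₗ β)} {a : α} {b : β}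

theorem isGLB_toLex (ha : IsLeast ((fun x => (ofLex x).1) '' s) a)
    (hb : IsGLB {b | toLex (a, b) ∈ s} b) : IsGLB s (toLex (a, b)) := by
  obtain ⟨⟨x, hx, rfl⟩, hlow⟩ := ha
  refine ⟨toLex.surjective.forall.mpr fun ⟨y₁, y₂⟩ hy => ?_,
    toLex.surjective.forall.mpr fun ⟨c₁, c₂⟩ hc => ?_⟩
  · rcases (hlow ⟨_, hy, rfl⟩).lt_or_eq with h | h
    · exact toLex_le_toLex.mpr (Or.inl h)
    · exact toLex_le_toLex.mpr (Or.inr ⟨h, hb.1 (by simpa [h] using hy)⟩)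
  · have hc₁ : c₁ ≤ (ofLex x).1 := monotone_fst _ _ (hc hx)
    refine toLex_le_toLex'.mpr ⟨hc₁, fun h => hb.2 fun b' hb' => ?_⟩
    exact (toLex_le_toLex'.mp (hc hb')).2 h

theorem isLUB_toLex (ha : IsGreatest ((fun x => (ofLex x).1) '' s) a)
    (hb : IsLUB {b | toLex (a, b) ∈ s} b) : IsLUB s (toLex (a, b)) := by
  obtain ⟨⟨x, hx, rfl⟩, hup⟩ := ha
  refine ⟨toLex.surjective.forall.mpr fun ⟨y₁, y₂⟩ hy => ?_,
    toLex.surjective.forall.mpr fun ⟨c₁, c₂⟩ hc => ?_⟩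
  · rcases (hup ⟨_, hy, rfl⟩).lt_or_eq with h | h
    · exact toLex_le_toLex.mpr (Or.inl h)
    · replace h : y₁ = (ofLex x).1 := h
      exact toLex_le_toLex.mpr (Or.inr ⟨h, hb.1 (by simpa [h] using hy)⟩)
  · have hc₁ : (ofLex x).1 ≤ c₁ := monotone_fst _ _ (hc hx)
    refine toLex_le_toLex'.mpr ⟨hc₁, fun h => hb.2 fun b' hb' => ?_⟩
    exact (toLex_le_toLex'.mp (hc hb')).2 h

theorem bddAbove_fiber_of_mem_upperBounds {d : α ×ₗ β} (hd : d ∈ upperBounds s)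
    (ha : (ofLex d).1 ≤ a) : BddAbove {b | toLex (a, b) ∈ s} :=
  ⟨(ofLex d).2, fun _ hb => (le_iff'.mp (hd hb)).2 (le_antisymm (le_iff'.mp (hd hb)).1 ha)⟩

theorem isLUB_toLex_bot [OrderBot β] (hlt : ∀ x ∈ s, (ofLex x).1 < a)
    (hle : ∀ c ∈ upperBounds s, a ≤ (ofLex c).1) : IsLUB s (toLex (a, ⊥)) :=
  ⟨fun x hx => le_iff.mpr (Or.inl (hlt x hx)),
    fun c hc => le_iff'.mpr ⟨hle c hc, fun _ => bot_le⟩⟩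

theorem bddAbove_of_bddAbove_fst [NoMaxOrder α] [Nonempty β]
    (h : BddAbove ((fun x => (ofLex x).1) '' s)) : BddAbove s := by
  obtain ⟨a, ha⟩ := h
  obtain ⟨a', haa'⟩ := exists_gt a
  obtain ⟨b⟩ := ‹Nonempty β›
  exact ⟨toLex (a', b), fun x hx => le_iff.mpr (Or.inl ((ha ⟨x, hx, rfl⟩).trans_lt haa'))⟩

end LinearOrder

variable {α β : Type*} [LinearOrder α] [WellFoundedLT α] [ConditionallyCompleteLinearOrder β]
  [OrderBot β] {s : Set (α ×ₗ β)}

theorem exists_isGLB (hs : s.Nonempty) : ∃ x, IsGLB s x := by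
  obtain ⟨a, ha⟩ : ∃ a, IsLeast ((fun x => (ofLex x).1) '' s) a :=
    ⟨_, wellFounded_lt.min_mem _ (hs.image _), fun _ h => wellFounded_lt.min_le h⟩
  obtain ⟨x, hx, hxa⟩ := ha.1
  have hF : {b | toLex (a, b) ∈ s}.Nonempty := ⟨(ofLex x).2, by simpa [← hxa] using hx⟩
  exact ⟨_, isGLB_toLex ha (isGLB_csInf hF (OrderBot.bddBelow _))⟩

theorem exists_isLUB (hbdd : BddAbove s) : ∃ x, IsLUB s x := by
  obtain ⟨c, hc⟩ := hbdd
  obtain ⟨a, ha⟩ := WellFoundedLT.exists_isLUB ⟨_, monotone_fst_ofLex.mem_upperBounds_image hc⟩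
  by_cases haA : a ∈ (fun x => (ofLex x).1) '' s
  · obtain ⟨x, hx, hxa⟩ := haA
    have hF : {b | toLex (a, b) ∈ s}.Nonempty := ⟨(ofLex x).2, by simpa [← hxa] using hx⟩
    by_cases hFbdd : BddAbove {b | toLex (a, b) ∈ s}
    · exact ⟨_, isLUB_toLex ⟨⟨x, hx, hxa⟩, ha.1⟩ (isLUB_csSup hF hFbdd)⟩
    -- an unbounded top fiber pushes the supremum up to the successor of `a`
    have hlt : ∀ d ∈ upperBounds s, a < (ofLex d).1 := fun d hd =>
      lt_of_not_ge fun h => hFbdd (bddAbove_fiber_of_mem_upperBounds hd h)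
    have hne : (Ioi a).Nonempty := ⟨_, hlt c hc⟩
    refine ⟨toLex (wellFounded_lt.min _ hne, ⊥), isLUB_toLex_bot (fun y hy => ?_) fun d hd => ?_⟩
    · exact (ha.1 ⟨y, hy, rfl⟩).trans_lt (wellFounded_lt.min_mem _ hne)
    · exact wellFounded_lt.min_le (hlt d hd)
  · refine ⟨toLex (a, ⊥), isLUB_toLex_bot (fun y hy => ?_) fun d hd => ?_⟩
    · exact (ha.1 ⟨y, hy, rfl⟩).lt_of_ne fun h => haA ⟨y, hy, h⟩
    · exact ha.2 (monotone_fst_ofLex.mem_upperBounds_image hd)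

end Prod.Lex

namespace Omega1

instance : WellFoundedLT Omega1 :=
  inferInstanceAs (WellFoundedLT {o : Ordinal.{0} // o < (Cardinal.aleph 1).ord})

instance : OrderBot Omega1 where
  bot := ⟨0, Cardinal.ord_pos.mpr (Cardinal.aleph_pos 1)⟩
  bot_le _ := show (0 : Ordinal) ≤ _ from zero_le

instance : NoMaxOrder Omega1 where
  exists_gt a := ⟨⟨Order.succ a.1,
    (Cardinal.isSuccLimit_ord (Cardinal.aleph0_le_aleph 1)).succ_lt a.2⟩, Order.lt_succ a.1⟩

theorem bddAbove_of_countable {s : Set Omega1} (hs : s.Countable) : BddAbove s := by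
  have : Countable s := hs.to_subtype
  have hlt : ∀ a : s, a.1.toOrdinal < Ordinal.omega 1 := fun a => Cardinal.ord_aleph 1 ▸ a.1.2
  exact ⟨⟨⨆ a : s, a.1.toOrdinal, Cardinal.ord_aleph 1 ▸ Ordinal.iSup_lt_omega_one hlt⟩,
    fun a ha => Ordinal.le_iSup (fun a : s => a.1.toOrdinal) ⟨a, ha⟩⟩

end Omega1

instance : Fact ((0 : ℝ) < 1) := ⟨one_pos⟩

-- makes `Ico 0 1` a conditionally complete linear order, via
-- `ordConnectedSubsetConditionallyCompleteLinearOrder`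
instance : Inhabited (Ico (0 : ℝ) 1) := ⟨⊥⟩

namespace ClosedLongRay

instance : OrderBot ClosedLongRay := inferInstanceAs (OrderBot (Omega1 ×ₗ Ico (0 : ℝ) 1))

theorem bddAbove_of_countable {s : Set ClosedLongRay} (hs : s.Countable) : BddAbove s :=
  Prod.Lex.bddAbove_of_bddAbove_fst (Omega1.bddAbove_of_countable (hs.image _))

instance : SeqCompactSpace ClosedLongRay :=
  .of_monotone_exists_isLUB
    (fun u _ => Prod.Lex.exists_isLUB (bddAbove_of_countable (countable_range u)))
    (fun u _ => Prod.Lex.exists_isGLB (range_nonempty u))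

end ClosedLongRay

theorem LongRay.bot_lt_toCLR (a : LongRay) : ⊥ < a.toCLR :=
  let ⟨_, h⟩ := a.2; bot_le.trans_lt h

namespace LongLine

open Sum

instance : Zero LongLine := ⟨toLex (inr ⊥)⟩

theorem neg_inl (a : LongRayᵒᵈ) : neg (toLex (inl a)) = toLex (inr (OrderDual.ofDual a).toCLR) :=
  rfl

theorem neg_inr_of_bot_lt {b : ClosedLongRay} (hb : ⊥ < b) :
    neg (toLex (inr b)) = toLex (inl (OrderDual.toDual (⟨b, ⊥, hb⟩ : LongRay))) :=
  dif_pos ⟨⊥, hb⟩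

theorem neg_zero : neg 0 = 0 :=
  dif_neg fun ⟨_, h⟩ => not_lt_bot h

theorem neg_neg (x : LongLine) : neg (neg x) = x := by
  obtain ⟨a | b, rfl⟩ := toLex.surjective x
  · exact neg_inr_of_bot_lt (OrderDual.ofDual a).bot_lt_toCLR
  · obtain rfl | hb := eq_bot_or_bot_lt b
    · exact (congrArg neg neg_zero).trans neg_zero
    · rw [neg_inr_of_bot_lt hb]; exact neg_inl _

theorem neg_involutive : Function.Involutive neg := neg_neg

theorem neg_antitone : Antitone neg := by
  intro x y hxy
  obtain ⟨a | b, rfl⟩ := toLex.surjective x <;> obtain ⟨a' | b', rfl⟩ := toLex.surjective y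
  · rw [neg_inl, neg_inl]
    exact Lex.inr_le_inr_iff.mpr (Lex.inl_le_inl_iff.mp hxy :)
  · rw [neg_inl]
    obtain rfl | hb' := eq_bot_or_bot_lt b'
    · exact neg_zero.trans_le (Lex.inr_le_inr_iff.mpr bot_le)
    · rw [neg_inr_of_bot_lt hb']; exact Lex.inl_le_inr _ _
  · exact absurd hxy Lex.not_inr_le_inl
  · obtain rfl | hb := eq_bot_or_bot_lt b
    · obtain rfl | hb' := eq_bot_or_bot_lt b'
      · exact le_rfl
      · rw [neg_inr_of_bot_lt hb']; exact (Lex.inl_le_inr _ _).trans neg_zero.ge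
    · have hb' := hb.trans_le (Lex.inr_le_inr_iff.mp hxy)
      rw [neg_inr_of_bot_lt hb, neg_inr_of_bot_lt hb']
      exact Lex.inl_le_inl_iff.mpr (Lex.inr_le_inr_iff.mp hxy :)

def negOrderIso : LongLine ≃o LongLineᵒᵈ where
  toEquiv := neg_involutive.toPerm.trans OrderDual.toDual
  map_rel_iff' {x y} := ⟨fun h => neg_neg x ▸ neg_neg y ▸ neg_antitone h, fun h => neg_antitone h⟩

theorem continuous_neg : Continuous neg :=
  continuous_ofDual.comp negOrderIso.continuous

theorem image_neg_Ici_zero : neg '' Ici 0 = Iic 0 :=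
  Subset.antisymm (image_subset_iff.mpr fun _ hx => neg_zero ▸ neg_antitone hx)
    fun x hx => ⟨neg x, neg_zero ▸ neg_antitone hx, neg_neg x⟩

def closedLongRayOrderIsoIci : ClosedLongRay ≃o Ici (0 : LongLine) :=
  StrictMono.orderIsoOfSurjective (fun b => ⟨toLex (inr b), Lex.inr_le_inr_iff.mpr bot_le⟩)
    (fun _ _ h => Lex.inr_lt_inr_iff.mpr h) fun ⟨x, hx⟩ => by
      obtain ⟨a | b, rfl⟩ := toLex.surjective x
      · exact absurd hx Lex.not_inr_le_inl
      · exact ⟨b, rfl⟩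

theorem isSeqCompact_Ici_zero : IsSeqCompact (Ici (0 : LongLine)) := by
  have h := IsSeqCompact.range
    (continuous_subtype_val.comp closedLongRayOrderIsoIci.continuous).seqContinuous
  rwa [closedLongRayOrderIsoIci.surjective.range_comp, Subtype.range_val] at h

theorem isSeqCompact_Iic_zero : IsSeqCompact (Iic (0 : LongLine)) :=
  image_neg_Ici_zero ▸ isSeqCompact_Ici_zero.image continuous_neg.seqContinuous

end LongLine

/-- The long line `𝕃` and the closed long ray `𝕃≥0` are sequentially
compact: every sequence has a subsequence converging to a point. -/
theorem statement17 : SeqCompactSpace LongLine ∧ SeqCompactSpace ClosedLongRay :=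
  ⟨⟨Iic_union_Ici (a := (0 : LongLine)) ▸
    LongLine.isSeqCompact_Iic_zero.union LongLine.isSeqCompact_Ici_zero⟩, inferInstance⟩
end
end
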